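/- Let n ≥ 1, let ρ be a positive semidefinite 2ⁿ×2ⁿ complex matrix with tr(ρ) = 1, and let O be a Hermitian 2ⁿ×2ⁿ complex matrix with tr(O) = 0. Define 𝒞⁽ⁱⁱⁱ⁾ = Σ_{x,y ∈ {0,1}ⁿ} [ ( |y x x⟩ + |x y x⟩ + |x x y⟩ )⟨y y y| + |y y y⟩( ⟨y x x| + ⟨x y x| + ⟨x x y| ) ], a matrix indexed by triples of bit strings. Then | tr( 𝒞⁽ⁱⁱⁱ⁾ (ρ ⊗ O ⊗ O) ) | ≤ 6 tr(O²). -/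

import Mathlib

/-!
Expanding the trace, `𝒞⁽ⁱⁱⁱ⁾` pairs `⟨yyy|` with `|yxx⟩, |xyx⟩, |xxy⟩` and back, so
`tr(𝒞⁽ⁱⁱⁱ⁾ (ρ ⊗ O ⊗ O))` is a double sum over `(x, y)` of the two terms `ρ_yy O_yx²`, `ρ_yy O_xy²`
and four terms such as `ρ_yx O_yy O_yx`. Since the diagonal of a density matrix is a probability
vector, the first two are at most `|O_yx|²`. For the other four, the `2 × 2` principal minors of
`ρ` give `|ρ_yx|² ≤ ρ_xx ρ_yy`, and then AM-GM gives
`2 |ρ_yx| |O_yy| |O_yx| ≤ ρ_xx |O_yy|² + ρ_yy |O_yx|²`. Summed over `x, y`, each of the six terms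
contributes at most `tr(O²) = ∑ |O_yx|²`.
-/

open Finset Matrix
open scoped ComplexOrder

/-- Bit strings of length `n`. -/
abbrev Bits (n : ℕ) := Fin n → Fin 2

/-- Triples of bit strings. -/
abbrev Bits3 (n : ℕ) := Bits n × Bits n × Bits n

/-- The standard basis vector `|a b c⟩` of `ℂ^{({0,1}ⁿ)³}`. -/
def ket3 {n : ℕ} (a b c : Bits n) : Bits3 n → ℂ :=
  fun p => if p = (a, b, c) then 1 else 0

/-- The Kronecker product `P ⊗ Q ⊗ R`, a matrix indexed by triples of bit strings. -/
def kron3 {ι : Type*} (P Q R : Matrix ι ι ℂ) : Matrix (ι × ι × ι) (ι × ι × ι) ℂ :=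
  Matrix.of fun p q => P p.1 q.1 * Q p.2.1 q.2.1 * R p.2.2 q.2.2

/-- The matrix `𝒞⁽ⁱⁱⁱ⁾ = Σ_{x,y} [(|yxx⟩+|xyx⟩+|xxy⟩)⟨yyy| + |yyy⟩(⟨yxx|+⟨xyx|+⟨xxy|)]`. -/
noncomputable def Ciii (n : ℕ) : Matrix (Bits3 n) (Bits3 n) ℂ :=
  ∑ x : Bits n, ∑ y : Bits n,
    (Matrix.vecMulVec (ket3 y x x + ket3 x y x + ket3 x x y) (ket3 y y y)
      + Matrix.vecMulVec (ket3 y y y) (ket3 y x x + ket3 x y x + ket3 x x y))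

theorem two_mul_mul_mul_le_of_sq_le_mul {a b c : ℝ} (ha : 0 ≤ a) (hb : 0 ≤ b) (h : c ^ 2 ≤ a * b)
    (u v : ℝ) : 2 * (c * u * v) ≤ b * u ^ 2 + a * v ^ 2 := by
  have key : 0 ≤ (a + b) * (b * u ^ 2 + a * v ^ 2 - 2 * (c * u * v)) := by
    have hsos : (a + b) * (b * u ^ 2 + a * v ^ 2 - 2 * (c * u * v)) =
        (a * v - c * u) ^ 2 + (b * u - c * v) ^ 2 + (a * b - c ^ 2) * (u ^ 2 + v ^ 2) := by ring
    have := sub_nonneg.mpr h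
    rw [hsos]
    positivity
  rcases (add_nonneg ha hb).eq_or_lt with hab | hab
  · obtain ⟨rfl, rfl⟩ : a = 0 ∧ b = 0 := ⟨by linarith, by linarith⟩
    obtain rfl : c = 0 := by simpa using h
    simp
  · nlinarith [(mul_nonneg_iff_of_pos_left hab).mp key]

namespace Matrix

variable {ι 𝕜 : Type*} [RCLike 𝕜] {A : Matrix ι ι 𝕜}

theorem IsHermitian.norm_apply_comm (hA : A.IsHermitian) (i j : ι) : ‖A i j‖ = ‖A j i‖ := by
  rw [← hA.apply j i, norm_star]

theorem IsHermitian.re_trace_mul_self [Fintype ι] (hA : A.IsHermitian) :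
    RCLike.re (A * A).trace = ∑ i, ∑ j, ‖A i j‖ ^ 2 := by
  simp only [trace, diag, mul_apply, map_sum]
  refine sum_congr rfl fun i _ => sum_congr rfl fun j _ => ?_
  rw [← hA.apply j i, RCLike.star_def, RCLike.mul_conj]
  norm_cast

theorem PosSemidef.norm_apply_self (hA : A.PosSemidef) (i : ι) : ‖A i i‖ = RCLike.re (A i i) := by
  simpa using congrArg RCLike.re (RCLike.norm_of_nonneg' hA.diag_nonneg)

theorem PosSemidef.norm_apply_sq_le (hA : A.PosSemidef) (i j : ι) :
    ‖A i j‖ ^ 2 ≤ RCLike.re (A i i) * RCLike.re (A j j) := by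
  have hdet := (hA.submatrix ![i, j]).det_nonneg
  simp only [det_fin_two, submatrix_apply, cons_val_zero, cons_val_one] at hdet
  rw [← hA.isHermitian.apply j i, RCLike.star_def, RCLike.mul_conj] at hdet
  have hii := (RCLike.nonneg_iff.mp (hA.diag_nonneg (i := i))).2
  have hjj := (RCLike.nonneg_iff.mp (hA.diag_nonneg (i := j))).2
  have hre := (RCLike.le_iff_re_im.mp hdet).1
  simp only [map_zero, map_sub, RCLike.mul_re, hii, hjj, mul_zero, sub_zero] at hre
  norm_cast at hre
  linarith

theorem PosSemidef.re_apply_le_re_trace [Fintype ι] (hA : A.PosSemidef) (i : ι) :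
    RCLike.re (A i i) ≤ RCLike.re A.trace := by
  rw [trace, map_sum]
  exact single_le_sum (f := fun j => RCLike.re (A j j))
    (fun j _ => (RCLike.nonneg_iff.mp hA.diag_nonneg).1) (mem_univ i)

end Matrix

theorem trace_vecMulVec_ket3_mul {n : ℕ} (a b c d e f : Bits n)
    (M : Matrix (Bits3 n) (Bits3 n) ℂ) :
    (vecMulVec (ket3 a b c) (ket3 d e f) * M).trace = M (d, e, f) (a, b, c) := by
  simp [trace, mul_apply, vecMulVec_apply, ket3, ite_mul]

def ciiiSummand {ι 𝕜 : Type*} [RCLike 𝕜] (ρ O : Matrix ι ι 𝕜) (x y : ι) : 𝕜 :=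
  ρ y y * (O y x ^ 2 + O x y ^ 2) + 2 * O y y * (ρ y x * O y x + ρ x y * O x y)

theorem trace_Ciii_mul_kron3 {n : ℕ} (ρ O : Matrix (Bits n) (Bits n) ℂ) :
    (Ciii n * kron3 ρ O O).trace = ∑ x, ∑ y, ciiiSummand ρ O x y := by
  simp only [Ciii, sum_mul, trace_sum, add_vecMulVec, vecMulVec_add, add_mul, trace_add,
    trace_vecMulVec_ket3_mul]
  refine sum_congr rfl fun x _ => sum_congr rfl fun y _ => ?_
  simp only [kron3, of_apply, ciiiSummand]
  ring

section

variable {ι 𝕜 : Type*} [RCLike 𝕜] {ρ O : Matrix ι ι 𝕜}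

theorem norm_ciiiSummand_le (hρ : ρ.PosSemidef) (hO : O.IsHermitian) (x y : ι) :
    ‖ciiiSummand ρ O x y‖ ≤
      4 * RCLike.re (ρ y y) * ‖O y x‖ ^ 2 + 2 * RCLike.re (ρ x x) * ‖O y y‖ ^ 2 := by
  have hcross : 2 * (‖ρ y x‖ * ‖O y y‖ * ‖O y x‖) ≤
      RCLike.re (ρ x x) * ‖O y y‖ ^ 2 + RCLike.re (ρ y y) * ‖O y x‖ ^ 2 :=
    two_mul_mul_mul_le_of_sq_le_mul (RCLike.nonneg_iff.mp hρ.diag_nonneg).1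
      (RCLike.nonneg_iff.mp hρ.diag_nonneg).1 (hρ.norm_apply_sq_le y x) _ _
  calc _ ≤ ‖ρ y y‖ * (‖O y x‖ ^ 2 + ‖O x y‖ ^ 2)
          + 2 * ‖O y y‖ * (‖ρ y x‖ * ‖O y x‖ + ‖ρ x y‖ * ‖O x y‖) := by
        refine (norm_add_le _ _).trans (add_le_add ?_ ?_)
        · rw [norm_mul, ← norm_pow, ← norm_pow]
          gcongr
          exact norm_add_le _ _
        · rw [norm_mul, norm_mul, RCLike.norm_two, ← norm_mul (ρ y x), ← norm_mul (ρ x y)]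
          gcongr
          exact norm_add_le _ _
    _ = 2 * RCLike.re (ρ y y) * ‖O y x‖ ^ 2 + 2 * (2 * (‖ρ y x‖ * ‖O y y‖ * ‖O y x‖)) := by
        rw [hρ.norm_apply_self, hO.norm_apply_comm x y, hρ.isHermitian.norm_apply_comm x y]
        ring
    _ ≤ _ := by linarith

theorem norm_sum_ciiiSummand_le [Fintype ι] (hρ : ρ.PosSemidef) (hρtr : ρ.trace = 1)
    (hO : O.IsHermitian) :
    ‖∑ x, ∑ y, ciiiSummand ρ O x y‖ ≤ 6 * RCLike.re (O * O).trace := by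
  have hdiag_sum : ∑ x, RCLike.re (ρ x x) = 1 := by
    simpa [trace, map_sum] using congrArg RCLike.re hρtr
  have hrow : ∑ x, ∑ y, RCLike.re (ρ y y) * ‖O y x‖ ^ 2 ≤ ∑ y, ∑ x, ‖O y x‖ ^ 2 := by
    rw [sum_comm]
    gcongr with y _ x _
    refine mul_le_of_le_one_left (sq_nonneg _) ?_
    simpa [hρtr] using hρ.re_apply_le_re_trace y
  have hdiag : ∑ x, ∑ y, RCLike.re (ρ x x) * ‖O y y‖ ^ 2 ≤ ∑ y, ∑ x, ‖O y x‖ ^ 2 := by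
    rw [← sum_mul_sum, hdiag_sum, one_mul]
    gcongr with y _
    exact single_le_sum (f := fun x => ‖O y x‖ ^ 2) (fun _ _ => sq_nonneg _) (mem_univ y)
  rw [hO.re_trace_mul_self]
  calc _ ≤ ∑ x, ∑ y,
          (4 * RCLike.re (ρ y y) * ‖O y x‖ ^ 2 + 2 * RCLike.re (ρ x x) * ‖O y y‖ ^ 2) :=
        norm_sum_le_of_le _ fun x _ => norm_sum_le_of_le _ fun y _ => norm_ciiiSummand_le hρ hO x y
    _ = 4 * ∑ x, ∑ y, RCLike.re (ρ y y) * ‖O y x‖ ^ 2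
          + 2 * ∑ x, ∑ y, RCLike.re (ρ x x) * ‖O y y‖ ^ 2 := by
        simp only [sum_add_distrib, mul_sum, mul_assoc]
    _ ≤ _ := by linarith

end

theorem Ciii_bound (n : ℕ)
    (ρ O : Matrix (Bits n) (Bits n) ℂ)
    (hρ : ρ.PosSemidef) (hρtr : ρ.trace = 1)
    (hO : O.IsHermitian) :
    ‖(Ciii n * kron3 ρ O O).trace‖ ≤ 6 * ((O * O).trace).re := by
  rw [trace_Ciii_mul_kron3]
  exact norm_sum_ciiiSummand_le hρ hρtr hO
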